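/- (Sample/dimension-contrastive duality.) Let K be a real M×N matrix. Define the sample-contrastive criterion L_c(K) = ‖KᵀK − diag(KᵀK)‖_F² and the dimension-contrastive criterion L_nc(K) = ‖KKᵀ − diag(KKᵀ)‖_F², where diag(A) is the diagonal matrix with the same diagonal as A and ‖·‖_F is the Frobenius norm. Then L_nc(K) + Σ_{j=1}^{M} ‖K_{j,·}‖₂⁴ = L_c(K) + Σ_{i=1}^{N} ‖K_{·,i}‖₂⁴, where K_{j,·} denotes the j-th row and K_{·,i} the i-th column of K. -/
import Mathlib


open Matrix Finset

/-- Squared Frobenius norm of a real matrix: `‖A‖_F² = Σ_{i,j} A_{ij}²`. -/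
def frobSq {m n : ℕ} (A : Matrix (Fin m) (Fin n) ℝ) : ℝ :=
  ∑ i, ∑ j, (A i j) ^ 2

lemma frobSq_sub_diag {n : ℕ} (A : Matrix (Fin n) (Fin n) ℝ) :
    frobSq (A - Matrix.diagonal (fun i => A i i)) + ∑ i, (A i i) ^ 2 = frobSq A := by
  unfold frobSq
  rw [← Finset.sum_add_distrib]
  congr 1; ext i
  have : ∀ j, ((A - Matrix.diagonal (fun i => A i i)) i j) ^ 2
      = (A i j)^2 - (if i = j then (A i i)^2 else 0) := by
    intro j
    by_cases h : i = j
    · subst h; simp [Matrix.diagonal]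
    · simp [Matrix.diagonal, h]
  simp only [this, Finset.sum_sub_distrib, Finset.sum_ite_eq, Finset.mem_univ, if_true]
  ring

lemma frobSq_eq_trace {m n : ℕ} (A : Matrix (Fin m) (Fin n) ℝ) :
    frobSq A = Matrix.trace (A * Aᵀ) := by
  unfold frobSq
  simp [Matrix.trace, Matrix.mul_apply, Matrix.diag, sq]

lemma frobSq_mul_transpose {m n : ℕ} (K : Matrix (Fin m) (Fin n) ℝ) :
    frobSq (K * Kᵀ) = frobSq (Kᵀ * K) := by
  rw [frobSq_eq_trace, frobSq_eq_trace, Matrix.transpose_mul, Matrix.transpose_transpose,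
    Matrix.transpose_mul, Matrix.transpose_transpose]
  rw [Matrix.mul_assoc, Matrix.trace_mul_comm]
  simp [Matrix.mul_assoc]

/-- **Sample/dimension-contrastive duality.** For any real
`M×N` matrix `K`, with `L_c(K) = ‖KᵀK − diag(KᵀK)‖_F²` and
`L_nc(K) = ‖KKᵀ − diag(KKᵀ)‖_F²`,
`L_nc(K) + Σ_j ‖K_{j,·}‖₂⁴ = L_c(K) + Σ_i ‖K_{·,i}‖₂⁴`. -/
theorem stmt_9 (M N : ℕ) (K : Matrix (Fin M) (Fin N) ℝ) :
    frobSq (K * Kᵀ - Matrix.diagonal (fun j => (K * Kᵀ) j j))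
        + ∑ j : Fin M, (∑ i : Fin N, (K j i) ^ 2) ^ 2
      = frobSq (Kᵀ * K - Matrix.diagonal (fun i => (Kᵀ * K) i i))
        + ∑ i : Fin N, (∑ j : Fin M, (K j i) ^ 2) ^ 2 := by
  have h1 := frobSq_sub_diag (K * Kᵀ)
  have h2 := frobSq_sub_diag (Kᵀ * K)
  have d1 : ∀ j, (K * Kᵀ) j j = ∑ i, (K j i) ^ 2 := by
    intro j; simp [Matrix.mul_apply, sq]
  have d2 : ∀ i, (Kᵀ * K) i i = ∑ j, (K j i) ^ 2 := by
    intro i; simp [Matrix.mul_apply, sq]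
  simp only [d1, d2] at h1 h2 ⊢
  rw [h1, h2, frobSq_mul_transpose]
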